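/- Let g : ℝ² → ℂ be Lebesgue integrable and radially symmetric, i.e., g(x) = G(‖x‖) for some function G : [0,∞) → ℂ. Then for every t ∈ ℝ², the Fourier transform ĝ(t) = ∫_{ℝ²} g(x) e^{-2πi x·t} dx satisfies ĝ(t) = 2π ∫₀^∞ r G(r) J₀(2π r ‖t‖) dr, where J₀(z) = ∑_{m=0}^{∞} (-1)^m z^{2m}/(4^m (m!)²). -/

import Mathlib

/-!
Transport the integral from `ℝ²` to `ℂ` by a linear isometry and use polar coordinates
`z = r e^{iθ}`. Writing `w = ‖w‖ e^{iφ}`, one has `⟪z, w⟫ = r ‖w‖ cos (θ - φ)`, and by periodicity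
the angular integral `∫_{-π}^{π} exp (-2πi r ‖w‖ cos (θ - φ)) dθ` does not depend on `φ`.
Expanding the exponential and integrating term by term, the odd powers of `cos` integrate to `0`
and `∫_{-π}^{π} cos^{2m} = 2π (2m)! / (4^m (m!)²)`, which leaves `2π J₀(2π r ‖w‖)`.
-/

open MeasureTheory

/-- The Bessel function `J₀` of the first kind of order `0`, defined by its
power series `J₀(z) = ∑_{m=0}^∞ (-1)^m z^{2m} / (4^m (m!)²)`. -/
noncomputable def besselJ0 (z : ℝ) : ℝ :=
  ∑' m : ℕ, (-1)^m * z^(2*m) / (4^m * (Nat.factorial m)^2)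

open Real
open Complex (I)
open scoped Nat Complex InnerProductSpace

lemma integral_cos_pow_add_two_neg_pi_pi (n : ℕ) :
    ∫ x in -π..π, cos x ^ (n + 2) = (n + 1) / (n + 2) * ∫ x in -π..π, cos x ^ n := by
  simp [integral_cos_pow]

lemma integral_cos_pow_odd_neg_pi_pi (m : ℕ) : ∫ x in -π..π, cos x ^ (2 * m + 1) = 0 := by
  induction m with
  | zero => simp
  | succ m ih => rw [show 2 * (m + 1) + 1 = 2 * m + 1 + 2 by ring,
      integral_cos_pow_add_two_neg_pi_pi, ih, mul_zero]

lemma integral_cos_pow_even_neg_pi_pi (m : ℕ) :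
    ∫ x in -π..π, cos x ^ (2 * m) = 2 * π * (2 * m)! / (4 ^ m * (m ! : ℝ) ^ 2) := by
  induction m with
  | zero => norm_num [two_mul]
  | succ m ih =>
    rw [show 2 * (m + 1) = 2 * m + 2 by ring, integral_cos_pow_add_two_neg_pi_pi, ih,
      Nat.factorial_succ (2 * m + 1), Nat.factorial_succ (2 * m), Nat.factorial_succ m]
    push_cast
    field_simp
    ring

lemma hasSum_integral_exp_mul_I_cos (c : ℝ) :
    HasSum (fun n : ℕ => (c * I) ^ n / n ! * ((∫ x in -π..π, cos x ^ n : ℝ) : ℂ))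
      (∫ θ in -π..π, cexp (c * cos θ * I)) := by
  have hterm (n : ℕ) : ∫ θ in -π..π, (c * cos θ * I : ℂ) ^ n / n !
      = (c * I) ^ n / n ! * ((∫ x in -π..π, cos x ^ n : ℝ) : ℂ) := by
    rw [← intervalIntegral.integral_ofReal, ← intervalIntegral.integral_const_mul]
    congr 1 with θ
    push_cast
    ring
  simp_rw [← hterm]
  refine intervalIntegral.hasSum_integral_of_dominated_convergence (fun n _ => |c| ^ n / n !)
    (fun n => by fun_prop) (fun n => ae_of_all _ fun θ _ => ?_)
    (ae_of_all _ fun _ _ => Real.summable_pow_div_factorial _) intervalIntegrable_const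
    (ae_of_all _ fun θ _ => ?_)
  · rw [norm_div, norm_pow, norm_mul, norm_mul, Complex.norm_I, mul_one, Complex.norm_natCast]
    gcongr
    simpa [← Complex.ofReal_cos] using mul_le_of_le_one_right (abs_nonneg c) (abs_cos_le_one θ)
  · rw [Complex.exp_eq_exp_ℂ]
    exact NormedSpace.expSeries_div_hasSum_exp _

theorem integral_exp_mul_I_cos (c : ℝ) :
    ∫ θ in -π..π, cexp (c * cos θ * I) = 2 * π * besselJ0 c := by
  have hodd : ∀ n ∉ Set.range (fun m : ℕ => 2 * m),
      (c * I) ^ n / n ! * ((∫ x in -π..π, cos x ^ n : ℝ) : ℂ) = 0 := by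
    intro n hn
    rcases Nat.even_or_odd' n with ⟨m, rfl | rfl⟩
    · exact absurd ⟨m, rfl⟩ hn
    · simp [integral_cos_pow_odd_neg_pi_pi]
  have heven := ((mul_right_injective₀ two_ne_zero).hasSum_iff hodd).mpr
    (hasSum_integral_exp_mul_I_cos c)
  rw [← heven.tsum_eq, besselJ0, Complex.ofReal_tsum, ← tsum_mul_left]
  congr 1 with m
  rw [Function.comp_apply, integral_cos_pow_even_neg_pi_pi, mul_pow, pow_mul I, Complex.I_sq]
  have : ((2 * m)! : ℂ) ≠ 0 := Nat.cast_ne_zero.mpr (Nat.factorial_ne_zero _)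
  push_cast
  field_simp

lemma besselJ0_neg (z : ℝ) : besselJ0 (-z) = besselJ0 z := by
  simp only [besselJ0, Even.neg_pow (even_two_mul _)]

theorem integral_exp_mul_I_cos_sub (c α : ℝ) :
    ∫ θ in -π..π, cexp (c * cos (θ - α) * I) = 2 * π * besselJ0 c := by
  have hper : Function.Periodic (fun θ : ℝ => cexp (c * cos θ * I)) (2 * π) := fun θ => by
    simp only [cos_add_two_pi]
  rw [intervalIntegral.integral_comp_sub_right (fun θ : ℝ => cexp (c * cos θ * I)),
    show π - α = -π - α + 2 * π by ring, hper.intervalIntegral_add_eq (-π - α) (-π),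
    show -π + 2 * π = π by ring, integral_exp_mul_I_cos]

section PolarCoord

variable {E : Type*} [NormedAddCommGroup E] [NormedSpace ℝ E]

lemma integrableOn_polarCoord_target {f : ℝ × ℝ → E} (hf : Integrable f) :
    IntegrableOn (fun p => p.1 • f (polarCoord.symm p)) polarCoord.target := by
  have hmeas := polarCoord.open_target.measurableSet
  have h := (integrableOn_image_iff_integrableOn_abs_det_fderiv_smul volume hmeas
    (fun p _ => (hasFDerivAt_polarCoord_symm p).hasFDerivWithinAt) polarCoord.symm.injOn f).mp
      (polarCoord.symm_image_target_eq_source ▸ hf.integrableOn)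
  refine h.congr_fun (fun p hp => ?_) hmeas
  simp only [det_fderivPolarCoordSymm, abs_of_pos (show 0 < p.1 from hp.1)]

lemma integrableOn_complex_polarCoord_target {f : ℂ → E} (hf : Integrable f) :
    IntegrableOn (fun p => p.1 • f (Complex.polarCoord.symm p)) polarCoord.target :=
  integrableOn_polarCoord_target <|
    (Complex.volume_preserving_equiv_real_prod.symm.integrable_comp_emb
      Complex.measurableEquivRealProd.symm.measurableEmbedding).mpr hf

theorem integral_eq_integral_Ioi_integral_Ioo_polarCoord_symm {f : ℂ → E} (hf : Integrable f) :
    ∫ z, f z = ∫ r in Set.Ioi 0, ∫ θ in Set.Ioo (-π) π, r • f (Complex.polarCoord.symm (r, θ)) := by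
  have h := integrableOn_complex_polarCoord_target hf
  rw [polarCoord_target, Measure.volume_eq_prod] at h
  rw [← Complex.integral_comp_polarCoord_symm, polarCoord_target, Measure.volume_eq_prod,
    setIntegral_prod _ h]

end PolarCoord

lemma inner_complex_polarCoord_symm (r θ : ℝ) (w : ℂ) :
    ⟪Complex.polarCoord.symm (r, θ), w⟫_ℝ = r * ‖w‖ * cos (θ - w.arg) := by
  calc ⟪Complex.polarCoord.symm (r, θ), w⟫_ℝ = r * (w.re * cos θ + w.im * sin θ) := by
        simp [Complex.inner, Complex.cos_ofReal_re, Complex.sin_ofReal_re, mul_add, mul_comm,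
          mul_left_comm]
    _ = r * ‖w‖ * cos (θ - w.arg) := by
        rw [cos_sub, ← Complex.norm_mul_cos_arg w, ← Complex.norm_mul_sin_arg w]
        ring

lemma integrable_mul_exp_inner {V : Type*} [NormedAddCommGroup V] [InnerProductSpace ℝ V]
    [MeasurableSpace V] [BorelSpace V] {μ : Measure V} {f : V → ℂ} (hf : Integrable f μ) (w : V) :
    Integrable (fun v => f v * cexp (-2 * π * I * ⟪v, w⟫_ℝ)) μ := by
  refine ((Real.fourierIntegral_convergent_iff w).mpr hf).congr (ae_of_all _ fun v => ?_)
  simp only [Circle.smul_def, Real.fourierChar_apply, smul_eq_mul]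
  push_cast
  ring_nf

theorem integral_radial_mul_exp_inner_eq_integral_besselJ0 (G : ℝ → ℂ) (w : ℂ)
    (hG : Integrable fun z : ℂ => G ‖z‖) :
    ∫ z : ℂ, G ‖z‖ * cexp (-2 * π * I * ⟪z, w⟫_ℝ) =
      2 * π * ∫ r in Set.Ioi 0, r * G r * besselJ0 (2 * π * r * ‖w‖) := by
  rw [integral_eq_integral_Ioi_integral_Ioo_polarCoord_symm (integrable_mul_exp_inner hG w),
    ← integral_const_mul]
  refine setIntegral_congr_fun measurableSet_Ioi fun r (hr : 0 < r) => ?_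
  have hpolar (θ : ℝ) : r • (G ‖Complex.polarCoord.symm (r, θ)‖ *
      cexp (-2 * π * I * ⟪Complex.polarCoord.symm (r, θ), w⟫_ℝ)) =
      r * G r * cexp (↑(-(2 * π * r * ‖w‖)) * cos (θ - w.arg) * I) := by
    rw [Complex.norm_polarCoord_symm, abs_of_pos hr, inner_complex_polarCoord_symm,
      Complex.real_smul]
    push_cast
    ring_nf
  simp_rw [hpolar]
  rw [integral_const_mul, ← integral_Ioc_eq_integral_Ioo,
    ← intervalIntegral.integral_of_le (by linarith [pi_pos]), integral_exp_mul_I_cos_sub,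
    besselJ0_neg]
  ring

/-- If `g : ℝ² → ℂ` is integrable and radially symmetric, `g(x) = G(‖x‖)`, then
its Fourier transform satisfies `ĝ(t) = 2π ∫₀^∞ r G(r) J₀(2π r ‖t‖) dr`. -/
theorem stmt_7 (g : EuclideanSpace ℝ (Fin 2) → ℂ) (G : ℝ → ℂ)
    (hg : Integrable g) (hrad : ∀ x, g x = G ‖x‖)
    (t : EuclideanSpace ℝ (Fin 2)) :
    ∫ x : EuclideanSpace ℝ (Fin 2),
        g x * Complex.exp (-2 * (Real.pi : ℂ) * Complex.I * ((inner ℝ x t : ℝ) : ℂ)) =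
      2 * (Real.pi : ℂ) *
        ∫ r in Set.Ioi (0:ℝ), (r : ℂ) * G r * (besselJ0 (2 * Real.pi * r * ‖t‖) : ℂ) := by
  let e := Complex.orthonormalBasisOneI.repr
  have he := e.measurePreserving
  have hemb := e.toHomeomorph.measurableEmbedding
  have hG : Integrable fun z : ℂ => G ‖z‖ := by
    simpa [Function.comp_def, hrad] using (he.integrable_comp_emb hemb).mpr hg
  rw [← he.integral_comp hemb, ← e.symm.norm_map t,
    ← integral_radial_mul_exp_inner_eq_integral_besselJ0 G _ hG]
  congr 1 with z
  rw [hrad, e.norm_map, ← e.inner_map_map, e.apply_symm_apply]
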